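/- For every integer k ≥ 1 and all real numbers x, y, with d⁺_j := (j−2)²·(j+2)/(4j²), a_k := (d⁺_k − d⁺_{k+2})², and ε_k := d⁺_k·d⁺_{k+2} + d⁺_{k+2}·d⁺_{k+4} − 2·(d⁺_{k+2})², one has (1/50)·(x² + y²) ≤ a_k·x² + 2·ε_k·x·y + a_{k+2}·y² ≤ (3/5)·(x² + y²). -/
import Mathlib

/-- The tridiagonal coefficient `d⁺_j = (j−2)²·(j+2)/(4j²)`. -/
noncomputable def dPlus (j : ℕ) : ℝ :=
  ((j : ℝ) - 2) ^ 2 * ((j : ℝ) + 2) / (4 * (j : ℝ) ^ 2)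

/-- The diagonal entry `a_k = (d⁺_k − d⁺_{k+2})²`. -/
noncomputable def aCoeff (k : ℕ) : ℝ := (dPlus k - dPlus (k + 2)) ^ 2

/-- The off-diagonal entry `ε_k = d⁺_k·d⁺_{k+2} + d⁺_{k+2}·d⁺_{k+4} − 2·(d⁺_{k+2})²`. -/
noncomputable def epsCoeff (k : ℕ) : ℝ :=
  dPlus k * dPlus (k + 2) + dPlus (k + 2) * dPlus (k + 4) - 2 * (dPlus (k + 2)) ^ 2

lemma aCoeff_bounds (k : ℕ) (hk : 3 ≤ k) :
    6/25 ≤ aCoeff k ∧ aCoeff k ≤ 3/10 := by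
  have hn : (3:ℝ) ≤ (k:ℝ) := by exact_mod_cast hk
  unfold aCoeff dPlus
  push_cast
  set n := (k:ℝ) with hdef
  have h0 : n ≠ 0 := by intro h; rw [h] at hn; norm_num at hn
  have h2 : n + 2 ≠ 0 := by intro h; nlinarith
  have hs : (0:ℝ) ≤ n - 3 := by linarith
  have hden : (0:ℝ) < 1280 * n^4 * (n+2)^4 := by
    have : (0:ℝ) < n := by linarith
    positivity
  have e1 : 3/10 - ((n-2)^2*(n+2)/(4*n^2) - (n+2-2)^2*(n+2+2)/(4*(n+2)^2))^2 =
      (3810880 + 5263360*(n-3) + 3528960*(n-3)^2 + 1771520*(n-3)^3 + 678784*(n-3)^4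
        + 172032*(n-3)^5 + 25856*(n-3)^6 + 2048*(n-3)^7 + 64*(n-3)^8)
      / (1280 * n^4 * (n+2)^4) := by
    field_simp
    ring
  have e2 : ((n-2)^2*(n+2)/(4*n^2) - (n+2-2)^2*(n+2+2)/(4*(n+2)^2))^2 - 6/25 =
      (385600 + 15155200*(n-3) + 20716800*(n-3)^2 + 11233280*(n-3)^3 + 3121024*(n-3)^4
        + 479232*(n-3)^5 + 41216*(n-3)^6 + 2048*(n-3)^7 + 64*(n-3)^8)
      / (6400 * n^4 * (n+2)^4) := by
    field_simp
    ring
  have hp1 : (0:ℝ) ≤ 3810880 + 5263360*(n-3) + 3528960*(n-3)^2 + 1771520*(n-3)^3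
      + 678784*(n-3)^4 + 172032*(n-3)^5 + 25856*(n-3)^6 + 2048*(n-3)^7 + 64*(n-3)^8 := by
    have := pow_nonneg hs 2
    have := pow_nonneg hs 3
    have := pow_nonneg hs 4
    have := pow_nonneg hs 5
    have := pow_nonneg hs 6
    have := pow_nonneg hs 7
    have := pow_nonneg hs 8
    linarith
  have hp2 : (0:ℝ) ≤ 385600 + 15155200*(n-3) + 20716800*(n-3)^2 + 11233280*(n-3)^3
      + 3121024*(n-3)^4 + 479232*(n-3)^5 + 41216*(n-3)^6 + 2048*(n-3)^7 + 64*(n-3)^8 := by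
    have := pow_nonneg hs 2
    have := pow_nonneg hs 3
    have := pow_nonneg hs 4
    have := pow_nonneg hs 5
    have := pow_nonneg hs 6
    have := pow_nonneg hs 7
    have := pow_nonneg hs 8
    linarith
  have hden2 : (0:ℝ) < 6400 * n^4 * (n+2)^4 := by nlinarith
  constructor
  · have := div_nonneg hp2 (le_of_lt hden2)
    linarith [e2 ▸ this]
  · have := div_nonneg hp1 (le_of_lt hden)
    linarith [e1 ▸ this]

lemma epsCoeff_bounds (k : ℕ) (hk : 3 ≤ k) :
    -(1/40) ≤ epsCoeff k ∧ epsCoeff k ≤ 1/40 := by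
  have hn : (3:ℝ) ≤ (k:ℝ) := by exact_mod_cast hk
  unfold epsCoeff dPlus
  push_cast
  set n := (k:ℝ) with hdef
  have h0 : n ≠ 0 := by intro h; rw [h] at hn; norm_num at hn
  have h2 : n + 2 ≠ 0 := by intro h; nlinarith
  have h4 : n + 4 ≠ 0 := by intro h; nlinarith
  have hs : (0:ℝ) ≤ n - 3 := by linarith
  have hden : (0:ℝ) < 20480 * n^2 * (n+2)^8 * (n+4)^2 := by
    have : (0:ℝ) < n := by linarith
    positivity
  have E : ℝ := 0
  have e1 : 1/40 - ((n-2)^2*(n+2)/(4*n^2) * ((n+2-2)^2*(n+2+2)/(4*(n+2)^2))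
      + (n+2-2)^2*(n+2+2)/(4*(n+2)^2) * ((n+4-2)^2*(n+4+2)/(4*(n+4)^2))
      - 2 * ((n+2-2)^2*(n+2+2)/(4*(n+2)^2))^2) =
      (28526400000 + 146814720000*(n-3) + 239372416000*(n-3)^2 + 203115468800*(n-3)^3
        + 106263805440*(n-3)^4 + 37080412160*(n-3)^5 + 8977029120*(n-3)^6
        + 1534095360*(n-3)^7 + 185298432*(n-3)^8 + 15595520*(n-3)^9
        + 881664*(n-3)^10 + 30720*(n-3)^11 + 512*(n-3)^12)
      / (20480 * n^2 * (n+2)^8 * (n+4)^2) := by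
    field_simp
    ring
  have e2 : ((n-2)^2*(n+2)/(4*n^2) * ((n+2-2)^2*(n+2+2)/(4*(n+2)^2))
      + (n+2-2)^2*(n+2+2)/(4*(n+2)^2) * ((n+4-2)^2*(n+4+2)/(4*(n+4)^2))
      - 2 * ((n+2-2)^2*(n+2+2)/(4*(n+2)^2))^2) + 1/40 =
      (147873600000 + 303425280000*(n-3) + 283795584000*(n-3)^2 + 162951731200*(n-3)^3
        + 65572994560*(n-3)^4 + 19943075840*(n-3)^5 + 4743239680*(n-3)^6
        + 878080000*(n-3)^7 + 122301952*(n-3)^8 + 12154880*(n-3)^9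
        + 799744*(n-3)^10 + 30720*(n-3)^11 + 512*(n-3)^12)
      / (20480 * n^2 * (n+2)^8 * (n+4)^2) := by
    field_simp
    ring
  have hp1 : (0:ℝ) ≤ 28526400000 + 146814720000*(n-3) + 239372416000*(n-3)^2
      + 203115468800*(n-3)^3 + 106263805440*(n-3)^4 + 37080412160*(n-3)^5
      + 8977029120*(n-3)^6 + 1534095360*(n-3)^7 + 185298432*(n-3)^8
      + 15595520*(n-3)^9 + 881664*(n-3)^10 + 30720*(n-3)^11 + 512*(n-3)^12 := by
    have := pow_nonneg hs 2
    have := pow_nonneg hs 3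
    have := pow_nonneg hs 4
    have := pow_nonneg hs 5
    have := pow_nonneg hs 6
    have := pow_nonneg hs 7
    have := pow_nonneg hs 8
    have := pow_nonneg hs 9
    have := pow_nonneg hs 10
    have := pow_nonneg hs 11
    have := pow_nonneg hs 12
    linarith
  have hp2 : (0:ℝ) ≤ 147873600000 + 303425280000*(n-3) + 283795584000*(n-3)^2
      + 162951731200*(n-3)^3 + 65572994560*(n-3)^4 + 19943075840*(n-3)^5
      + 4743239680*(n-3)^6 + 878080000*(n-3)^7 + 122301952*(n-3)^8
      + 12154880*(n-3)^9 + 799744*(n-3)^10 + 30720*(n-3)^11 + 512*(n-3)^12 := by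
    have := pow_nonneg hs 2
    have := pow_nonneg hs 3
    have := pow_nonneg hs 4
    have := pow_nonneg hs 5
    have := pow_nonneg hs 6
    have := pow_nonneg hs 7
    have := pow_nonneg hs 8
    have := pow_nonneg hs 9
    have := pow_nonneg hs 10
    have := pow_nonneg hs 11
    have := pow_nonneg hs 12
    linarith
  constructor
  · have := div_nonneg hp2 (le_of_lt hden)
    linarith [e2 ▸ this]
  · have := div_nonneg hp1 (le_of_lt hden)
    linarith [e1 ▸ this]

/-- Uniform two-sided bounds for the quadratic form
`Q_k(x,y) = a_k·x² + 2·ε_k·x·y + a_{k+2}·y²`: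
`(1/50)(x² + y²) ≤ Q_k(x,y) ≤ (3/5)(x² + y²)`. -/
theorem quadratic_form_bounds (k : ℕ) (hk : 1 ≤ k) (x y : ℝ) :
    (1 / 50) * (x ^ 2 + y ^ 2) ≤
        aCoeff k * x ^ 2 + 2 * epsCoeff k * x * y + aCoeff (k + 2) * y ^ 2 ∧
      aCoeff k * x ^ 2 + 2 * epsCoeff k * x * y + aCoeff (k + 2) * y ^ 2 ≤
        (3 / 5) * (x ^ 2 + y ^ 2) := by
  match k, hk with
  | 1, _ =>
    have hd1 : dPlus 1 = 3/4 := by norm_num [dPlus]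
    have hd3 : dPlus 3 = 5/36 := by norm_num [dPlus]
    have hd5 : dPlus 5 = 63/100 := by norm_num [dPlus]
    have hd7 : dPlus 7 = 225/196 := by norm_num [dPlus]
    have ha1 : aCoeff 1 = 121/324 := by norm_num [aCoeff, hd1, hd3]
    have ha3 : aCoeff 3 = 48841/202500 := by norm_num [aCoeff, hd3, hd5]
    have he1 : epsCoeff 1 = 124/810 := by norm_num [epsCoeff, hd1, hd3, hd5]
    refine ⟨?_, ?_⟩ <;>
      · rw [show (1:ℕ)+2 = 3 from rfl, ha1, ha3, he1]
        nlinarith [sq_nonneg (x+y), sq_nonneg (x-y), sq_nonneg x, sq_nonneg y]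
  | 2, _ =>
    have hd2 : dPlus 2 = 0 := by norm_num [dPlus]
    have hd4 : dPlus 4 = 3/8 := by norm_num [dPlus]
    have hd6 : dPlus 6 = 8/9 := by norm_num [dPlus]
    have hd8 : dPlus 8 = 45/32 := by norm_num [dPlus]
    have ha2 : aCoeff 2 = 9/64 := by norm_num [aCoeff, hd2, hd4]
    have ha4 : aCoeff 4 = (3/8 - 8/9)^2 := by norm_num [aCoeff, hd4, hd6]
    have he2 : epsCoeff 2 = 3/8 * (8/9) - 2 * (3/8)^2 := by
      norm_num [epsCoeff, hd2, hd4, hd6]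
    refine ⟨?_, ?_⟩ <;>
      · rw [show (2:ℕ)+2 = 4 from rfl, ha2, ha4, he2]
        nlinarith [sq_nonneg (x+y), sq_nonneg (x-y), sq_nonneg x, sq_nonneg y]
  | (m+3), _ =>
    have hA1 := aCoeff_bounds (m+3) (by omega)
    have hA2 := aCoeff_bounds (m+3+2) (by omega)
    have hE := epsCoeff_bounds (m+3) (by omega)
    obtain ⟨hA1l, hA1u⟩ := hA1
    obtain ⟨hA2l, hA2u⟩ := hA2
    obtain ⟨hEl, hEu⟩ := hE
    constructor
    · nlinarith [mul_nonneg (by linarith : (0:ℝ) ≤ aCoeff (m+3) - 6/25) (sq_nonneg x),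
        mul_nonneg (by linarith : (0:ℝ) ≤ aCoeff (m+3+2) - 6/25) (sq_nonneg y),
        mul_nonneg (by linarith : (0:ℝ) ≤ 1/40 - epsCoeff (m+3)) (sq_nonneg (x-y)),
        mul_nonneg (by linarith : (0:ℝ) ≤ 1/40 + epsCoeff (m+3)) (sq_nonneg (x+y)),
        sq_nonneg x, sq_nonneg y]
    · nlinarith [mul_nonneg (by linarith : (0:ℝ) ≤ 3/10 - aCoeff (m+3)) (sq_nonneg x),
        mul_nonneg (by linarith : (0:ℝ) ≤ 3/10 - aCoeff (m+3+2)) (sq_nonneg y),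
        mul_nonneg (by linarith : (0:ℝ) ≤ 1/40 - epsCoeff (m+3)) (sq_nonneg (x-y)),
        mul_nonneg (by linarith : (0:ℝ) ≤ 1/40 + epsCoeff (m+3)) (sq_nonneg (x+y)),
        sq_nonneg x, sq_nonneg y]
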